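/- Let φ, α, κ, γ̃_ij, A_ij, Γ_i be smooth fields on ℝ × ℝ³ satisfying the linearized BSSN evolution equations (E3) and (E5), and let t₀ ∈ ℝ. Assume that at time t₀ the constraints Γ_i(t₀,x) = ∂_l γ̃_il(t₀,x) (for all i) and ∂_l Γ_l(t₀,x) − 8Δφ(t₀,x) = 0 hold for all x ∈ ℝ³. Then ∂_t M_i(t₀,x) = 0 for all x ∈ ℝ³ and each i, where M_i := ∂_l A_il − (2/3)∂_i κ is the momentum constraint quantity. -/

import Mathlib

noncomputable section

/-- Spacetime ℝ × ℝ³. -/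
abbrev Spc : Type := ℝ × (Fin 3 → ℝ)

/-- Time derivative ∂_t. -/
noncomputable def pt (f : Spc → ℝ) : Spc → ℝ :=
  fun p => deriv (fun s => f (s, p.2)) p.1

/-- Spatial partial derivative ∂_i. -/
noncomputable def ps (i : Fin 3) (f : Spc → ℝ) : Spc → ℝ :=
  fun p => deriv (fun s => f (p.1, Function.update p.2 i s)) (p.2 i)

/-- Spatial Laplacian Δ = Σ_i ∂_i ∂_i. -/
noncomputable def lap (f : Spc → ℝ) : Spc → ℝ :=
  fun p => ∑ i : Fin 3, ps i (ps i f) p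

/-- Kronecker delta δ_ij. -/
noncomputable def kron (i j : Fin 3) : ℝ := if i = j then 1 else 0

/-! Commuting `∂_t` with the spatial derivatives in `M_i` and substituting (E3) and (E5), the
lapse terms cancel and, at every time,
`∂_t M_i = ½ ∂_i (∂_l Γ_l − 8 Δφ) + ½ Δ (Γ_i − ∂_l γ̃_il)`.
At `t₀` both brackets vanish on the whole slice `{t₀} × ℝ³`, hence so do their spatial
derivatives. -/

section SecondDerivative

variable {E F : Type*} [NormedAddCommGroup E] [NormedSpace ℝ E]
  [NormedAddCommGroup F] [NormedSpace ℝ F] {f : E → F}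

theorem differentiable_fderiv_apply (hf : ContDiff ℝ 2 f) (v : E) :
    Differentiable ℝ (fun q => fderiv ℝ f q v) :=
  ((hf.fderiv_right (m := 1) le_rfl).clm_apply contDiff_const).differentiable one_ne_zero

theorem fderiv_fderiv_apply_comm (hf : ContDiff ℝ 2 f) (p v w : E) :
    fderiv ℝ (fun q => fderiv ℝ f q w) p v = fderiv ℝ (fun q => fderiv ℝ f q v) p w := by
  have hdf : Differentiable ℝ (fderiv ℝ f) :=
    (hf.fderiv_right (m := 1) le_rfl).differentiable one_ne_zero
  have fderiv_apply_eq : ∀ a b : E,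
      fderiv ℝ (fun q => fderiv ℝ f q b) p a = fderiv ℝ (fderiv ℝ f) p a b := by
    intro a b
    rw [fderiv_clm_apply (hdf p) (differentiableAt_const b)]
    simp
  rw [fderiv_apply_eq, fderiv_apply_eq]
  exact (hf.contDiffAt.isSymmSndFDerivAt (by simp)).eq v w

end SecondDerivative

section PartialDerivatives

variable {f g : Spc → ℝ}

theorem ps_apply_eq_fderiv (i : Fin 3) {p : Spc} (hf : DifferentiableAt ℝ f p) :
    ps i f p = fderiv ℝ f p (0, Pi.single i 1) := by
  have hline : HasDerivAt (fun s => ((p.1, Function.update p.2 i s) : Spc)) (0, Pi.single i 1)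
      (p.2 i) :=
    (hasDerivAt_const _ _).prodMk (hasDerivAt_update p.2 i (p.2 i))
  exact (hf.hasFDerivAt.comp_hasDerivAt_of_eq (p.2 i) hline (by simp)).deriv

theorem pt_apply_eq_fderiv {p : Spc} (hf : DifferentiableAt ℝ f p) :
    pt f p = fderiv ℝ f p (1, 0) :=
  (hf.hasFDerivAt.comp_hasDerivAt p.1 ((hasDerivAt_id _).prodMk (hasDerivAt_const _ _))).deriv

theorem ps_eq_fderiv (i : Fin 3) (hf : Differentiable ℝ f) :
    ps i f = fun q => fderiv ℝ f q (0, Pi.single i 1) :=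
  funext fun q => ps_apply_eq_fderiv i (hf q)

theorem pt_eq_fderiv (hf : Differentiable ℝ f) : pt f = fun q => fderiv ℝ f q (1, 0) :=
  funext fun q => pt_apply_eq_fderiv (hf q)

theorem ps_fun_add (i : Fin 3) (hf : Differentiable ℝ f) (hg : Differentiable ℝ g) :
    ps i (fun q => f q + g q) = fun q => ps i f q + ps i g q := by
  rw [ps_eq_fderiv i (hf.fun_add hg), ps_eq_fderiv i hf, ps_eq_fderiv i hg]
  funext q
  rw [fderiv_fun_add (hf q) (hg q), add_apply]

theorem ps_fun_sub (i : Fin 3) (hf : Differentiable ℝ f) (hg : Differentiable ℝ g) :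
    ps i (fun q => f q - g q) = fun q => ps i f q - ps i g q := by
  rw [ps_eq_fderiv i (hf.fun_sub hg), ps_eq_fderiv i hf, ps_eq_fderiv i hg]
  funext q
  rw [fderiv_fun_sub (hf q) (hg q), sub_apply]

theorem ps_sum {ι : Type*} (s : Finset ι) (i : Fin 3) {F : ι → Spc → ℝ}
    (hF : ∀ l ∈ s, Differentiable ℝ (F l)) :
    ps i (fun q => ∑ l ∈ s, F l q) = fun q => ∑ l ∈ s, ps i (F l) q := by
  rw [ps_eq_fderiv i (Differentiable.fun_sum hF)]
  funext q
  rw [fderiv_fun_sum fun l hl => hF l hl q, sum_apply]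
  exact Finset.sum_congr rfl fun l hl => (ps_apply_eq_fderiv i (hF l hl q)).symm

theorem ps_const_mul (i : Fin 3) (c : ℝ) : ps i (fun q => c * f q) = fun q => c * ps i f q :=
  funext fun _ => deriv_const_mul_field c

theorem ps_neg (i : Fin 3) : ps i (fun q => -f q) = fun q => -ps i f q :=
  funext fun _ => deriv.neg

theorem pt_fun_sub (hf : Differentiable ℝ f) (hg : Differentiable ℝ g) :
    pt (fun q => f q - g q) = fun q => pt f q - pt g q := by
  rw [pt_eq_fderiv (hf.fun_sub hg), pt_eq_fderiv hf, pt_eq_fderiv hg]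
  funext q
  rw [fderiv_fun_sub (hf q) (hg q), sub_apply]

theorem pt_sum {ι : Type*} (s : Finset ι) {F : ι → Spc → ℝ}
    (hF : ∀ l ∈ s, Differentiable ℝ (F l)) :
    pt (fun q => ∑ l ∈ s, F l q) = fun q => ∑ l ∈ s, pt (F l) q := by
  rw [pt_eq_fderiv (Differentiable.fun_sum hF)]
  funext q
  rw [fderiv_fun_sum fun l hl => hF l hl q, sum_apply]
  exact Finset.sum_congr rfl fun l hl => (pt_apply_eq_fderiv (hF l hl q)).symm

theorem pt_const_mul (c : ℝ) : pt (fun q => c * f q) = fun q => c * pt f q :=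
  funext fun _ => deriv_const_mul_field c

theorem ps_ps_comm (hf : ContDiff ℝ 2 f) (i j : Fin 3) : ps i (ps j f) = ps j (ps i f) := by
  have hdf : Differentiable ℝ f := hf.differentiable two_ne_zero
  funext p
  rw [ps_eq_fderiv j hdf, ps_eq_fderiv i hdf,
    ps_apply_eq_fderiv i (differentiable_fderiv_apply hf _ p),
    ps_apply_eq_fderiv j (differentiable_fderiv_apply hf _ p)]
  exact fderiv_fderiv_apply_comm hf p _ _

theorem pt_ps_comm (hf : ContDiff ℝ 2 f) (i : Fin 3) : pt (ps i f) = ps i (pt f) := by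
  have hdf : Differentiable ℝ f := hf.differentiable two_ne_zero
  funext p
  rw [ps_eq_fderiv i hdf, pt_eq_fderiv hdf,
    ps_apply_eq_fderiv i (differentiable_fderiv_apply hf _ p),
    pt_apply_eq_fderiv (differentiable_fderiv_apply hf _ p)]
  exact fderiv_fderiv_apply_comm hf p _ _

@[fun_prop]
theorem contDiff_ps (i : Fin 3) (hf : ContDiff ℝ (⊤ : ℕ∞) f) : ContDiff ℝ (⊤ : ℕ∞) (ps i f) := by
  rw [ps_eq_fderiv i (hf.differentiable (by simp))]
  exact (hf.fderiv_right le_rfl).clm_apply contDiff_const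

@[fun_prop]
theorem contDiff_lap (hf : ContDiff ℝ (⊤ : ℕ∞) f) : ContDiff ℝ (⊤ : ℕ∞) (lap f) :=
  ContDiff.sum fun i _ => contDiff_ps i (contDiff_ps i hf)

theorem ps_lap_comm (hf : ContDiff ℝ (⊤ : ℕ∞) f) (i : Fin 3) : ps i (lap f) = lap (ps i f) := by
  funext p
  unfold lap
  rw [ps_sum _ i fun l _ => by fun_prop (disch := simp)]
  refine Finset.sum_congr rfl fun l _ => ?_
  rw [ps_ps_comm (contDiff_infty.1 (contDiff_ps l hf) 2), ps_ps_comm (contDiff_infty.1 hf 2) i l]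

theorem lap_fun_sub (hf : ContDiff ℝ (⊤ : ℕ∞) f) (hg : ContDiff ℝ (⊤ : ℕ∞) g) (p : Spc) :
    lap (fun q => f q - g q) p = lap f p - lap g p := by
  unfold lap
  simp (disch := fun_prop (disch := simp)) only [ps_fun_sub, Finset.sum_sub_distrib]

theorem lap_sum {ι : Type*} (s : Finset ι) {F : ι → Spc → ℝ}
    (hF : ∀ l ∈ s, ContDiff ℝ (⊤ : ℕ∞) (F l)) (p : Spc) :
    lap (fun q => ∑ l ∈ s, F l q) p = ∑ l ∈ s, lap (F l) p := by
  unfold lap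
  simp (disch := fun_prop (disch := simp)) only [ps_sum]
  exact Finset.sum_comm

theorem ps_eq_zero_of_slice {t : ℝ} (h : ∀ y, f (t, y) = 0) (i : Fin 3) (x : Fin 3 → ℝ) :
    ps i f (t, x) = 0 := by
  simp [ps, h]

theorem lap_eq_zero_of_slice {t : ℝ} (h : ∀ y, f (t, y) = 0) (x : Fin 3 → ℝ) :
    lap f (t, x) = 0 :=
  Finset.sum_eq_zero fun i _ => ps_eq_zero_of_slice (ps_eq_zero_of_slice h i) i x

end PartialDerivatives

theorem sum_kron_mul (i : Fin 3) (f : Fin 3 → ℝ) : ∑ l, kron i l * f l = f i := by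
  simp [kron]

def momentumConstraint (A : Fin 3 → Fin 3 → Spc → ℝ) (κ : Spc → ℝ) (i : Fin 3) : Spc → ℝ :=
  fun p => (∑ l, ps l (A i l) p) - (2/3) * ps i κ p

def hamiltonianConstraint (φ : Spc → ℝ) (Γ : Fin 3 → Spc → ℝ) : Spc → ℝ :=
  fun p => (∑ l, ps l (Γ l) p) - 8 * lap φ p

def gammaConstraint (Γ : Fin 3 → Spc → ℝ) (γ : Fin 3 → Fin 3 → Spc → ℝ) (i : Fin 3) :
    Spc → ℝ :=
  fun p => Γ i p - ∑ l, ps l (γ i l) p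

section LinearizedBSSN

variable {φ α κ : Spc → ℝ} {Γ : Fin 3 → Spc → ℝ} {γ A : Fin 3 → Fin 3 → Spc → ℝ}

theorem ps_pt_eq_of_E5 (hφ : ContDiff ℝ (⊤ : ℕ∞) φ) (hα : ContDiff ℝ (⊤ : ℕ∞) α)
    (hΓ : ∀ i, ContDiff ℝ (⊤ : ℕ∞) (Γ i)) (hγ : ∀ i j, ContDiff ℝ (⊤ : ℕ∞) (γ i j))
    (i l : Fin 3)
    (E5 : ∀ p, pt (A i l) p =
      -(1/2) * lap (γ i l) p + (1/2) * (ps i (Γ l) p + ps l (Γ i) p)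
        - 2 * ps i (ps l φ) p - 2 * kron i l * lap φ p
        - ps i (ps l α) p + (1/3) * kron i l * lap α p) :
    ps l (pt (A i l)) = fun p =>
      -(1/2) * lap (ps l (γ i l)) p + (1/2) * (ps i (ps l (Γ l)) p + ps l (ps l (Γ i)) p)
        - 2 * ps l (ps l (ps i φ)) p - 2 * kron i l * lap (ps l φ) p
        - ps l (ps l (ps i α)) p + (1/3) * kron i l * lap (ps l α) p := by
  rw [funext E5]
  simp (disch := fun_prop (disch := simp)) only [ps_fun_add, ps_fun_sub, ps_const_mul]
  rw [ps_lap_comm (hγ i l), ps_ps_comm (contDiff_infty.1 (hΓ l) 2) l i,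
    ps_ps_comm (contDiff_infty.1 hφ 2) i l, ps_lap_comm hφ,
    ps_ps_comm (contDiff_infty.1 hα 2) i l, ps_lap_comm hα]

theorem pt_momentumConstraint (hφ : ContDiff ℝ (⊤ : ℕ∞) φ) (hα : ContDiff ℝ (⊤ : ℕ∞) α)
    (hκ : ContDiff ℝ (⊤ : ℕ∞) κ) (hΓ : ∀ i, ContDiff ℝ (⊤ : ℕ∞) (Γ i))
    (hγ : ∀ i j, ContDiff ℝ (⊤ : ℕ∞) (γ i j)) (hA : ∀ i j, ContDiff ℝ (⊤ : ℕ∞) (A i j))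
    (E3 : ∀ p, pt κ p = -(lap α p)) (i : Fin 3)
    (E5 : ∀ j p, pt (A i j) p =
      -(1/2) * lap (γ i j) p + (1/2) * (ps i (Γ j) p + ps j (Γ i) p)
        - 2 * ps i (ps j φ) p - 2 * kron i j * lap φ p
        - ps i (ps j α) p + (1/3) * kron i j * lap α p) (p : Spc) :
    pt (momentumConstraint A κ i) p =
      (1/2) * ps i (hamiltonianConstraint φ Γ) p + (1/2) * lap (gammaConstraint Γ γ i) p := by
  unfold momentumConstraint hamiltonianConstraint gammaConstraint
  simp (disch := fun_prop (disch := simp)) only [pt_fun_sub, pt_sum, pt_const_mul,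
    fun l => pt_ps_comm (contDiff_infty.1 (hA i l) 2) l, pt_ps_comm (contDiff_infty.1 hκ 2),
    funext E3, ps_neg, ps_pt_eq_of_E5 hφ hα hΓ hγ i _ (E5 _), ps_fun_sub, ps_sum, ps_const_mul,
    lap_fun_sub, lap_sum, ps_lap_comm hφ, ps_lap_comm hα]
  simp only [Finset.sum_add_distrib, Finset.sum_sub_distrib, ← Finset.mul_sum, mul_assoc,
    sum_kron_mul]
  unfold lap
  ring

end LinearizedBSSN

theorem momentum_constraint_initial_time_derivative_vanishes_general
    (φ α κ : Spc → ℝ) (Γ : Fin 3 → Spc → ℝ)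
    (γ A : Fin 3 → Fin 3 → Spc → ℝ)
    (hφ : ContDiff ℝ (⊤ : ℕ∞) φ) (hα : ContDiff ℝ (⊤ : ℕ∞) α)
    (hκ : ContDiff ℝ (⊤ : ℕ∞) κ)
    (hΓ : ∀ i, ContDiff ℝ (⊤ : ℕ∞) (Γ i))
    (hγ : ∀ i j, ContDiff ℝ (⊤ : ℕ∞) (γ i j)) (hA : ∀ i j, ContDiff ℝ (⊤ : ℕ∞) (A i j))
    (E3 : ∀ p, pt κ p = -(lap α p))
    (E5 : ∀ i j p, pt (A i j) p =
      -(1/2) * lap (γ i j) p + (1/2) * (ps i (Γ j) p + ps j (Γ i) p)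
        - 2 * ps i (ps j φ) p - 2 * kron i j * lap φ p
        - ps i (ps j α) p + (1/3) * kron i j * lap α p)
    (t₀ : ℝ)
    (hGammaConstr : ∀ i, ∀ x : Fin 3 → ℝ, Γ i (t₀, x) = ∑ l, ps l (γ i l) (t₀, x))
    (hHamConstr : ∀ x : Fin 3 → ℝ,
      (∑ l, ps l (Γ l) (t₀, x)) - 8 * lap φ (t₀, x) = 0)
    (M : Fin 3 → Spc → ℝ)
    (hM : ∀ i, M i = fun p => (∑ l, ps l (A i l) p) - (2/3) * ps i κ p) :
    ∀ i, ∀ x : Fin 3 → ℝ, pt (M i) (t₀, x) = 0 := by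
  intro i x
  have hGamma : ∀ y, gammaConstraint Γ γ i (t₀, y) = 0 := fun y =>
    sub_eq_zero.2 (hGammaConstr i y)
  rw [show M i = momentumConstraint A κ i from hM i,
    pt_momentumConstraint hφ hα hκ hΓ hγ hA E3 i (E5 i),
    ps_eq_zero_of_slice hHamConstr, lap_eq_zero_of_slice hGamma]
  norm_num

/-- If (E3) and (E5) hold and, at time `t₀`, the constraints `Γ_i = ∂_l γ̃_il` and
`∂_l Γ_l − 8Δφ = 0` hold, then `∂_t M_i(t₀,·) = 0`. -/
theorem momentum_constraint_initial_time_derivative_vanishes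
    (φ α κ : Spc → ℝ) (Γ : Fin 3 → Spc → ℝ)
    (γ A : Fin 3 → Fin 3 → Spc → ℝ)
    (hφ : ContDiff ℝ (⊤ : ℕ∞) φ) (hα : ContDiff ℝ (⊤ : ℕ∞) α)
    (hκ : ContDiff ℝ (⊤ : ℕ∞) κ)
    (hΓ : ∀ i, ContDiff ℝ (⊤ : ℕ∞) (Γ i))
    (hγ : ∀ i j, ContDiff ℝ (⊤ : ℕ∞) (γ i j)) (hA : ∀ i j, ContDiff ℝ (⊤ : ℕ∞) (A i j))
    (hγsym : ∀ i j, γ i j = γ j i) (hAsym : ∀ i j, A i j = A j i)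
    (E3 : ∀ p, pt κ p = -(lap α p))
    (E5 : ∀ i j p, pt (A i j) p =
      -(1/2) * lap (γ i j) p + (1/2) * (ps i (Γ j) p + ps j (Γ i) p)
        - 2 * ps i (ps j φ) p - 2 * kron i j * lap φ p
        - ps i (ps j α) p + (1/3) * kron i j * lap α p)
    (t₀ : ℝ)
    (hGammaConstr : ∀ i, ∀ x : Fin 3 → ℝ, Γ i (t₀, x) = ∑ l, ps l (γ i l) (t₀, x))
    (hHamConstr : ∀ x : Fin 3 → ℝ,
      (∑ l, ps l (Γ l) (t₀, x)) - 8 * lap φ (t₀, x) = 0)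
    (M : Fin 3 → Spc → ℝ)
    (hM : ∀ i, M i = fun p => (∑ l, ps l (A i l) p) - (2/3) * ps i κ p) :
    ∀ i, ∀ x : Fin 3 → ℝ, pt (M i) (t₀, x) = 0 :=
  momentum_constraint_initial_time_derivative_vanishes_general φ α κ Γ γ A hφ hα hκ hΓ hγ hA E3 E5
    t₀ hGammaConstr hHamConstr M hM
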